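/- Let (X, d) be a compact metric space, κ a universal kernel on X, and K₁,…,Kₙ ⊆ X compact, pairwise disjoint subsets. Then for all α₁,…,αₙ ∈ ℝ and ε > 0, there exists a function g induced by κ with sup-norm ‖g‖_∞ ≤ maxᵢ |αᵢ| + ε, such that the restriction of g to K := ⋃ᵢ Kᵢ satisfies sup_{x ∈ K} |g(x) − ∑ᵢ αᵢ 1_{Kᵢ}(x)| ≤ ε. -/

import Mathlib

open scoped BigOperators

open Metric Set in
theorem universal_kernel_indicator_approx
    {X : Type*} [MetricSpace X] [CompactSpace X]
    {H : Type*} [NormedAddCommGroup H] [InnerProductSpace ℝ H]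
    (Φ : X → H)
    (huniv : ∀ f : X → ℝ, Continuous f → ∀ ε > 0,
      ∃ h : H, ∀ x : X, |f x - (inner ℝ h (Φ x) : ℝ)| ≤ ε)
    (n : ℕ) (K : Fin n → Set X) (hK : ∀ i, IsCompact (K i))
    (hdisj : Pairwise (fun i j => Disjoint (K i) (K j)))
    (α : Fin n → ℝ) (ε : ℝ) (hε : 0 < ε) :
    ∃ h : H,
      (∀ x : X, |(inner ℝ h (Φ x) : ℝ)| ≤ (⨆ i, |α i|) + ε) ∧
      (∀ x ∈ ⋃ i, K i,
        |(inner ℝ h (Φ x) : ℝ) - ∑ i : Fin n, (K i).indicator (fun _ => α i) x| ≤ ε) := by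
  classical
  set M : ℝ := ⨆ i, |α i| with hM
  have hMnonneg : 0 ≤ M := Real.iSup_nonneg fun i => abs_nonneg _
  have hMle : ∀ i, |α i| ≤ M := fun i =>
    le_ciSup (f := fun i => |α i|) (Set.Finite.bddAbove (Set.finite_range _)) i
  set C : Fin n → Set X := fun j => ⋃ i ∈ ({j}ᶜ : Set (Fin n)), K i with hCdef
  have hCclosed : ∀ j, IsClosed (C j) :=
    fun j => Set.Finite.isClosed_biUnion (Set.toFinite _) fun i _ => (hK i).isClosed
  have hmemC : ∀ {j i : Fin n} {x : X}, i ≠ j → x ∈ K i → x ∈ C j := by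
    intro j i x hij hx
    exact Set.mem_biUnion hij hx
  have hdisjC : ∀ j, Disjoint (K j) (C j) := by
    intro j
    rw [Set.disjoint_left]
    intro x hxK hxC
    simp only [hCdef, Set.mem_iUnion, Set.mem_compl_iff, Set.mem_singleton_iff] at hxC
    obtain ⟨i, hi, hxi⟩ := hxC
    exact Set.disjoint_left.mp (hdisj (Ne.symm hi)) hxK hxi
  -- bump functions
  set g : Fin n → X → ℝ := fun j x =>
    if (K j).Nonempty then
      if (C j).Nonempty then infDist x (C j) / (infDist x (K j) + infDist x (C j))
      else 1
    else 0 with hgdef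
  have hden : ∀ j, (K j).Nonempty → (C j).Nonempty → ∀ x : X,
      0 < infDist x (K j) + infDist x (C j) := by
    intro j hKj hCj x
    rcases lt_or_eq_of_le (add_nonneg (infDist_nonneg (s := K j) (x := x))
      (infDist_nonneg (s := C j) (x := x))) with h | h
    · exact h
    · exfalso
      have h1 : infDist x (K j) = 0 := by
        have := infDist_nonneg (s := K j) (x := x)
        have := infDist_nonneg (s := C j) (x := x)
        linarith
      have h2 : infDist x (C j) = 0 := by
        have := infDist_nonneg (s := K j) (x := x)
        have := infDist_nonneg (s := C j) (x := x)
        linarith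
      have hx1 : x ∈ K j := ((hK j).isClosed.mem_iff_infDist_zero hKj).mpr h1
      have hx2 : x ∈ C j := ((hCclosed j).mem_iff_infDist_zero hCj).mpr h2
      exact Set.disjoint_left.mp (hdisjC j) hx1 hx2
  have hgcont : ∀ j, Continuous (g j) := by
    intro j
    by_cases h1 : (K j).Nonempty
    · by_cases h2 : (C j).Nonempty
      · simp only [hgdef, if_pos h1, if_pos h2]
        exact (continuous_infDist_pt _).div
          ((continuous_infDist_pt _).add (continuous_infDist_pt _))
          (fun x => (hden j h1 h2 x).ne')
      · simp only [hgdef, if_pos h1, if_neg h2]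
        exact continuous_const
    · simp only [hgdef, if_neg h1]
      exact continuous_const
  have hg_on : ∀ j, ∀ x ∈ K j, g j x = 1 := by
    intro j x hx
    have h1 : (K j).Nonempty := ⟨x, hx⟩
    by_cases h2 : (C j).Nonempty
    · have hd1 : infDist x (K j) = 0 := infDist_zero_of_mem hx
      have h2' : infDist x (C j) ≠ 0 := by
        intro h0
        exact Set.disjoint_left.mp (hdisjC j) hx
          (((hCclosed j).mem_iff_infDist_zero h2).mpr h0)
      simp only [hgdef, if_pos h1, if_pos h2, hd1, zero_add, div_self h2']
    · simp only [hgdef, if_pos h1, if_neg h2]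
  have hg_off : ∀ j i, i ≠ j → ∀ x ∈ K i, g j x = 0 := by
    intro j i hij x hx
    have hxC : x ∈ C j := hmemC hij hx
    by_cases h1 : (K j).Nonempty
    · have h2 : (C j).Nonempty := ⟨x, hxC⟩
      simp only [hgdef, if_pos h1, if_pos h2, infDist_zero_of_mem hxC, zero_div]
    · simp only [hgdef, if_neg h1]
  -- candidate continuous function
  set f₀ : X → ℝ := fun x => ∑ j : Fin n, α j * g j x with hf0
  set f : X → ℝ := fun x => max (-M) (min M (f₀ x)) with hf
  have hfcont : Continuous f := by
    apply Continuous.max continuous_const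
    apply Continuous.min continuous_const
    exact continuous_finset_sum _ fun j _ => continuous_const.mul (hgcont j)
  have hf0_on : ∀ i, ∀ x ∈ K i, f₀ x = α i := by
    intro i x hx
    show ∑ j : Fin n, α j * g j x = α i
    rw [Finset.sum_eq_single i]
    · rw [hg_on i x hx, mul_one]
    · intro j _ hj
      rw [hg_off j i (fun h => hj h.symm) x hx, mul_zero]
    · intro h; exact absurd (Finset.mem_univ i) h
  have hf_on : ∀ i, ∀ x ∈ K i, f x = α i := by
    intro i x hx
    rw [hf]
    simp only [hf0_on i x hx]
    rcases abs_le.mp (hMle i) with ⟨h1, h2⟩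
    rw [min_eq_right h2, max_eq_right h1]
  have hfbound : ∀ x, |f x| ≤ M := by
    intro x
    rw [abs_le]
    constructor
    · exact le_max_left _ _
    · exact max_le (by linarith) (min_le_left _ _)
  obtain ⟨h, hh⟩ := huniv f hfcont ε hε
  refine ⟨h, fun x => ?_, fun x hx => ?_⟩
  · rcases abs_le.mp (hh x) with ⟨h1, h2⟩
    rcases abs_le.mp (hfbound x) with ⟨h3, h4⟩
    rw [abs_le]
    constructor <;> linarith
  · obtain ⟨i, hxi⟩ := Set.mem_iUnion.mp hx
    have hsum : ∑ j : Fin n, (K j).indicator (fun _ => α j) x = α i := by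
      rw [Finset.sum_eq_single i]
      · exact Set.indicator_of_mem hxi _
      · intro j _ hj
        exact Set.indicator_of_notMem
          (fun hxj => Set.disjoint_left.mp (hdisj hj) hxj hxi) _
      · intro hni; exact absurd (Finset.mem_univ i) hni
    rw [hsum, ← hf_on i x hxi, abs_sub_comm]
    exact hh x
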